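/- arXiv:1911.01144 — 2 statements merged into one kernel-verified Lean document; each statement's English description precedes it below -/
import Mathlib

section
/- Let ρ be a density operator on an N-qubit Hilbert space and let S = {s_1, ..., s_N} be a stabilizer generator set with spanned group S̄. Then Tr(ρ (((N−1)/2) I − (1/2) ∑_{i=1}^N s_i)) ≥ Tr(ρ ((1/2) I − ∏_{i=1}^N (I + s_i)/2)). That is, the alternative witness W_a has expectation value at least that of the standard witness W on every state. -/
/-!
With `Pᵢ = (1 + sᵢ)/2`, the `Pᵢ` are pairwise commuting orthogonal projections and
`W_a - W = ∑ᵢ (1 - Pᵢ) - (1 - ∏ᵢ Pᵢ)`. This is positive semidefinite by the operator union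
bound `1 - ∏ᵢ Pᵢ ≤ ∑ᵢ (1 - Pᵢ)`, which follows by induction from
`1 - p q = (1 - q) + (1 - p) - (1 - p)(1 - q)` and `(1 - p)(1 - q) ≥ 0` for commuting
projections `p, q`. Finally `Tr(ρ X) ≥ 0` for positive semidefinite `ρ` and `X`.
-/

open Matrix
open scoped ComplexOrder

namespace IsStarProjection

variable {R : Type*}

theorem list_prod [Semiring R] [StarRing R] {L : List R}
    (hL : ∀ p ∈ L, IsStarProjection p) (hcomm : L.Pairwise Commute) :
    IsStarProjection L.prod := by
  induction L with
  | nil => exact .one R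
  | cons p L ih =>
    obtain ⟨hp, hL⟩ := List.forall_mem_cons.mp hL
    obtain ⟨hpL, hcomm⟩ := List.pairwise_cons.mp hcomm
    rw [List.prod_cons]
    exact hp.mul (ih hL hcomm) (Commute.list_prod_right _ _ hpL)

theorem one_sub_list_prod_le_sum_one_sub [Ring R] [PartialOrder R] [StarRing R]
    [StarOrderedRing R] {L : List R}
    (hL : ∀ p ∈ L, IsStarProjection p) (hcomm : L.Pairwise Commute) :
    1 - L.prod ≤ (L.map (1 - ·)).sum := by
  induction L with
  | nil => simp
  | cons p L ih =>
    obtain ⟨hp, hL⟩ := List.forall_mem_cons.mp hL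
    obtain ⟨hpL, hcomm⟩ := List.pairwise_cons.mp hcomm
    have hpq : Commute (1 - p) (1 - L.prod) :=
      (Commute.one_left _).sub_left <| (Commute.one_right p).sub_right <|
        Commute.list_prod_right _ _ hpL
    have hgap : 0 ≤ (1 - p) * (1 - L.prod) :=
      (hp.one_sub.mul (list_prod hL hcomm).one_sub hpq).nonneg
    rw [List.prod_cons, List.map_cons, List.sum_cons, add_comm (1 - p)]
    calc 1 - p * L.prod = (1 - L.prod) + ((1 - p) - (1 - p) * (1 - L.prod)) := by
          noncomm_ring
      _ ≤ _ := add_le_add (ih hL hcomm) (sub_le_self _ hgap)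

end IsStarProjection

theorem isStarProjection_inv_two_smul_one_add {𝕜 A : Type*} [RCLike 𝕜] [Ring A] [StarRing A]
    [Algebra 𝕜 A] [StarModule 𝕜 A] {s : A} (hs : IsSelfAdjoint s) (hsq : s ^ 2 = 1) :
    IsStarProjection ((2 : 𝕜)⁻¹ • (1 + s)) where
  isSelfAdjoint := .smul (isSelfAdjoint_iff.mpr (by simp)) ((IsSelfAdjoint.one A).add hs)
  isIdempotentElem := by
    have hsq' : (1 + s) * (1 + s) = (2 : 𝕜) • (1 + s) := by
      have hss : s * s = 1 := by rw [← sq, hsq]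
      rw [two_smul, mul_add, add_mul, add_mul, hss]
      noncomm_ring
    rw [IsIdempotentElem, smul_mul_smul_comm, hsq', smul_smul]
    norm_num

open scoped MatrixOrder in
theorem Matrix.PosSemidef.trace_mul_nonneg {n 𝕜 : Type*} [Fintype n] [DecidableEq n] [RCLike 𝕜]
    {A B : Matrix n n 𝕜} (hA : A.PosSemidef) (hB : B.PosSemidef) : 0 ≤ (A * B).trace := by
  obtain ⟨S, rfl⟩ := CStarAlgebra.nonneg_iff_eq_star_mul_self.mp hA.nonneg
  rw [star_eq_conjTranspose, mul_assoc, trace_mul_comm]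
  exact (hB.mul_mul_conjTranspose_same S).trace_nonneg

open scoped MatrixOrder in
theorem alternative_witness_ge_standard_witness_general
    {N : ℕ} (ρ : Matrix (Fin N → Fin 2) (Fin N → Fin 2) ℂ)
    (hρ : ρ.PosSemidef)
    (s : Fin N → Matrix (Fin N → Fin 2) (Fin N → Fin 2) ℂ)
    (hherm : ∀ i, (s i).IsHermitian)
    (hsq : ∀ i, s i ^ 2 = 1)
    (hcomm : ∀ i j, Commute (s i) (s j)) :
    (ρ * ((((N : ℂ) - 1) / 2) • (1 : Matrix (Fin N → Fin 2) (Fin N → Fin 2) ℂ)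
        - (2 : ℂ)⁻¹ • ∑ i, s i)).trace ≥
    (ρ * ((2 : ℂ)⁻¹ • (1 : Matrix (Fin N → Fin 2) (Fin N → Fin 2) ℂ)
        - (List.ofFn fun i => (2 : ℂ)⁻¹ • (1 + s i)).prod)).trace := by
  set P := fun i => (2 : ℂ)⁻¹ • (1 + s i)
  have hP : ∀ p ∈ List.ofFn P, IsStarProjection p := by
    rw [List.forall_mem_ofFn_iff]
    exact fun i => isStarProjection_inv_two_smul_one_add (hherm i).isSelfAdjoint (hsq i)
  have hPcomm : (List.ofFn P).Pairwise Commute := List.pairwise_ofFn.mpr fun i j _ =>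
    (((Commute.one_right _).add_right ((Commute.one_left _).add_left (hcomm i j))).smul_left
      _).smul_right _
  have hdiff : ((((N : ℂ) - 1) / 2) • 1 - (2 : ℂ)⁻¹ • ∑ i, s i)
      - ((2 : ℂ)⁻¹ • 1 - (List.ofFn P).prod)
      = ((List.ofFn P).map (1 - ·)).sum - (1 - (List.ofFn P).prod) := by
    rw [List.map_ofFn, List.sum_ofFn]
    simp only [Function.comp_apply, P, Finset.sum_sub_distrib, ← Finset.smul_sum,
      Finset.sum_add_distrib, Finset.sum_const, Finset.card_univ, Fintype.card_fin,
      ← Nat.cast_smul_eq_nsmul ℂ]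
    module
  rw [ge_iff_le, ← sub_nonneg, ← trace_sub, ← mul_sub, hdiff]
  exact hρ.trace_mul_nonneg <| nonneg_iff_posSemidef.mp <| sub_nonneg.mpr <|
    IsStarProjection.one_sub_list_prod_le_sum_one_sub hP hPcomm

/-- For any density operator `ρ` on the `N`-qubit Hilbert space and any
stabilizer generator set `s₁,…,s_N` (pairwise commuting Hermitian involutions), the
alternative witness `W_a = ((N−1)/2)·I − (1/2)∑ᵢ sᵢ` has expectation value at least that of
the standard witness `W = (1/2)·I − ∏ᵢ (I+sᵢ)/2`. -/
theorem alternative_witness_ge_standard_witness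
    {N : ℕ} (ρ : Matrix (Fin N → Fin 2) (Fin N → Fin 2) ℂ)
    (hρ : ρ.PosSemidef) (hρtr : ρ.trace = 1)
    (s : Fin N → Matrix (Fin N → Fin 2) (Fin N → Fin 2) ℂ)
    (hherm : ∀ i, (s i).IsHermitian)
    (hsq : ∀ i, s i ^ 2 = 1)
    (hcomm : ∀ i j, Commute (s i) (s j)) :
    (ρ * ((((N : ℂ) - 1) / 2) • (1 : Matrix (Fin N → Fin 2) (Fin N → Fin 2) ℂ)
        - (2 : ℂ)⁻¹ • ∑ i, s i)).trace ≥
    (ρ * ((2 : ℂ)⁻¹ • (1 : Matrix (Fin N → Fin 2) (Fin N → Fin 2) ℂ)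
        - (List.ofFn fun i => (2 : ℂ)⁻¹ • (1 + s i)).prod)).trace :=
  alternative_witness_ge_standard_witness_general ρ hρ s hherm hsq hcomm
end

section
/- Let W be a set of n Pauli operators on N qubits with binary representation, and let M(W) be its N × C(n,2) pseudo-incidence matrix over F2, defined by M(W)_{μ,{i,j}} = 1 if the single-qubit factors s_{iμ}, s_{jμ} anticommute, and 0 otherwise. If R is an invertible n × n matrix over F2 and W^(R) is the recombined set with s_i^(R) = ∏_j s_j^{R_{ij}}, then the column space of M(W^(R)) over F2 equals the column space of M(W); in particular rank_{F2} M(W^(R)) = rank_{F2} M(W). -/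
open Matrix

/-- The pseudo-incidence matrix of a set of `n` Pauli operators on `N` qubits, given in the
binary picture by their `Z`-parts `z i` and `X`-parts `x i`: the `(μ, {i,j})` entry is `1`
iff the single-qubit factors of `sᵢ` and `sⱼ` anticommute at qubit `μ`, i.e.
`zᵢμ xⱼμ + zⱼμ xᵢμ = 1` over `F₂`. -/
def pseudoInc {n N : ℕ} (z x : Fin n → Fin N → ZMod 2) :
    Matrix (Fin N) (Sym2 (Fin n)) (ZMod 2) :=
  fun μ e => Sym2.lift ⟨fun i j => z i μ * x j μ + z j μ * x i μ, fun i j => by ring⟩ e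

/-! The entry `z_iμ x_jμ + z_jμ x_iμ` is a symmetric bilinear expression in the rows `i`, `j`,
so after recombining by `R` each column of the pseudo-incidence matrix is an `F₂`-combination
of the old columns. Recombining back by `R⁻¹` gives the reverse inclusion of column spaces. -/

lemma pseudoInc_mul_transpose_apply {n N : ℕ} (R : Matrix (Fin n) (Fin n) (ZMod 2))
    (z x : Matrix (Fin n) (Fin N) (ZMod 2)) (i j : Fin n) :
    (pseudoInc (R * z) (R * x))ᵀ s(i, j) =
      ∑ k, ∑ l, (R i k * R j l) • (pseudoInc z x)ᵀ s(k, l) := by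
  funext μ
  simp only [transpose_apply, pseudoInc, Sym2.lift_mk, mul_apply, Finset.sum_apply,
    Pi.smul_apply, smul_eq_mul, Finset.sum_mul_sum, mul_add, Finset.sum_add_distrib]
  congr 1
  · exact Finset.sum_congr rfl fun k _ => Finset.sum_congr rfl fun l _ => by ring
  · rw [Finset.sum_comm]
    exact Finset.sum_congr rfl fun k _ => Finset.sum_congr rfl fun l _ => by ring

lemma span_cols_pseudoInc_mul_le {n N : ℕ} (R : Matrix (Fin n) (Fin n) (ZMod 2))
    (z x : Matrix (Fin n) (Fin N) (ZMod 2)) :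
    Submodule.span (ZMod 2) (Set.range (pseudoInc (R * z) (R * x))ᵀ) ≤
      Submodule.span (ZMod 2) (Set.range (pseudoInc z x)ᵀ) := by
  rw [Submodule.span_le]
  rintro _ ⟨e, rfl⟩
  induction e using Sym2.ind with
  | _ i j =>
    rw [pseudoInc_mul_transpose_apply]
    exact Submodule.sum_mem _ fun k _ => Submodule.sum_mem _ fun l _ =>
      Submodule.smul_mem _ _ (Submodule.subset_span ⟨s(k, l), rfl⟩)

lemma span_cols_pseudoInc_mul {n N : ℕ} (R : Matrix (Fin n) (Fin n) (ZMod 2)) [Invertible R]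
    (z x : Matrix (Fin n) (Fin N) (ZMod 2)) :
    Submodule.span (ZMod 2) (Set.range (pseudoInc (R * z) (R * x))ᵀ) =
      Submodule.span (ZMod 2) (Set.range (pseudoInc z x)ᵀ) := by
  refine le_antisymm (span_cols_pseudoInc_mul_le R z x) ?_
  simpa only [Matrix.invOf_mul_cancel_left] using
    span_cols_pseudoInc_mul_le (⅟R) (R * z) (R * x)

/-- Recombining the Pauli set by an invertible binary matrix `R`
(`sᵢ^(R) = ∏ⱼ sⱼ^{Rᵢⱼ}`, i.e. `F₂`-linear recombination of the binary vectors) preserves the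
column space of the pseudo-incidence matrix, and in particular its `F₂`-rank. -/
theorem pseudoInc_column_space_invariant
    {n N : ℕ} (z x : Fin n → Fin N → ZMod 2)
    (R : Matrix (Fin n) (Fin n) (ZMod 2)) [Invertible R] :
    Submodule.span (ZMod 2)
        (Set.range (pseudoInc (fun i μ => ∑ j, R i j * z j μ)
          (fun i μ => ∑ j, R i j * x j μ))ᵀ) =
      Submodule.span (ZMod 2) (Set.range (pseudoInc z x)ᵀ) ∧
    (pseudoInc (fun i μ => ∑ j, R i j * z j μ) (fun i μ => ∑ j, R i j * x j μ)).rank =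
      (pseudoInc z x).rank := by
  -- the recombined binary vectors `fun i μ => ∑ j, R i j * z j μ` are `R * z` by definition
  have hspan := span_cols_pseudoInc_mul R z x
  refine ⟨hspan, ?_⟩
  rw [rank_eq_finrank_span_cols, rank_eq_finrank_span_cols]
  exact congrArg (fun S : Submodule (ZMod 2) (Fin N → ZMod 2) => Module.finrank (ZMod 2) S) hspan
end
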